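/- The strength relation on the present-color labels Λ_p with respect to the present-color constraint ℰ_p is exactly reflexivity together with the pairs: EE ≤ ℓ for every ℓ ∈ Λ_p; ℓ ≤ MM for every ℓ ∈ Λ_p; XM0 ≤ XY00, XM0 ≤ XY01; XM1 ≤ XY10, XM1 ≤ XY11; MY0 ≤ XY00, MY0 ≤ XY10; MY1 ≤ XY01, MY1 ≤ XY11. No other pairs of distinct labels are related. -/
import Mathlib


/-- A two-bit label: the first component is the input bit, the second the output bit. -/
abbrev TwoBit := Bool × Bool

def b00 : TwoBit := (false, false)
def b01 : TwoBit := (false, true)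
def b10 : TwoBit := (true, false)
def b11 : TwoBit := (true, true)

/-- The 22 maximal bit triples. -/
def bitTriples : List (Fin 3 → Set TwoBit) :=
  [ ![{b00, b10, b11}, {b00}, {b00}],
    ![{b01, b10, b11}, {b00}, {b01}],
    ![{b00, b10, b11}, {b01}, {b01}],
    ![{b00, b01, b11}, {b00}, {b10}],
    ![{b00, b01, b10}, {b00}, {b11}],
    ![{b00, b01, b10}, {b01}, {b10}],
    ![{b00, b01, b11}, {b01}, {b11}],
    ![{b01, b10, b11}, {b10}, {b10}],
    ![{b00, b10, b11}, {b10}, {b11}],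
    ![{b01, b10, b11}, {b11}, {b11}],
    ![{b00, b10}, {b00}, {b00, b11}],
    ![{b01, b11}, {b00}, {b01, b10}],
    ![{b00, b10}, {b01}, {b01, b10}],
    ![{b01, b11}, {b00, b11}, {b01}],
    ![{b00, b10}, {b01, b11}, {b10}],
    ![{b11}, {b00, b10}, {b00, b10}],
    ![{b10}, {b01, b10}, {b01, b10}],
    ![{b10}, {b00, b11}, {b00, b11}],
    ![{b00, b11}, {b01, b10}, {b11}],
    ![{b11}, {b01, b11}, {b01, b11}],
    ![{b10, b11}, {b00, b01}, {b00, b01}],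
    ![{b10, b11}, {b10, b11}, {b10, b11}] ]

/-- The ten present-color labels Λ_p = {EE, MM, MY0, MY1, XM0, XM1, XY00, XY01, XY10, XY11}. -/
inductive Lab where
  | EE : Lab
  | MM : Lab
  | MY : Bool → Lab
  | XM : Bool → Lab
  | XY : Bool → Bool → Lab
deriving DecidableEq

open Lab

/-- Augmentation of a set of two-bit labels: replace each two-bit label `xy` by `XY x y`;
add `XM x` if both `XY x 0` and `XY x 1` are present; add `MY y` if both `XY 0 y` and
`XY 1 y` are present; and always add `MM`. -/
def aug (T : Set TwoBit) : Set Lab :=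
  {MM} ∪ {l | ∃ x y, (x, y) ∈ T ∧ l = XY x y}
    ∪ {l | ∃ x, (x, false) ∈ T ∧ (x, true) ∈ T ∧ l = XM x}
    ∪ {l | ∃ y, (false, y) ∈ T ∧ (true, y) ∈ T ∧ l = MY y}

/-- The 23 condensed configurations defining the present-color constraint. -/
def condP : List (Fin 3 → Set Lab) :=
  bitTriples.map (fun T => fun j => aug (T j)) ++ [![{MM}, Set.univ, Set.univ]]

/-- The present-color constraint ℰ_p: the family of size-3 multisets represented by the
23 condensed configurations. -/
def Ep : Set (Multiset Lab) :=
  {C | ∃ D ∈ condP, ∃ l₁ ∈ D 0, ∃ l₂ ∈ D 1, ∃ l₃ ∈ D 2,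
    C = ({l₁, l₂, l₃} : Multiset Lab)}

/-- `l'` is at least as strong as `l` w.r.t. ℰ_p: for every multiset `{l, l₂, l₃} ∈ ℰ_p`,
also `{l', l₂, l₃} ∈ ℰ_p`. -/
def strongerP (l l' : Lab) : Prop :=
  ∀ l₂ l₃ : Lab, ({l, l₂, l₃} : Multiset Lab) ∈ Ep → ({l', l₂, l₃} : Multiset Lab) ∈ Ep



-- ===== auxiliary general lemmas =====
lemma pair_eq' {α : Type*} (b c e f : α) :
    ({b,c} : Multiset α) = {e,f} ↔ (b=e∧c=f) ∨ (b=f∧c=e) := by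
  constructor
  · intro h
    rcases Multiset.cons_eq_cons.1 h with ⟨rfl, h2⟩ | ⟨hne, cs, h1, h2⟩
    · exact Or.inl ⟨rfl, Multiset.singleton_inj.1 h2⟩
    · obtain ⟨rfl, rfl⟩ := (Multiset.singleton_eq_cons_iff _).1 h1
      obtain ⟨rfl, -⟩ := (Multiset.singleton_eq_cons_iff _).1 h2
      exact Or.inr ⟨rfl, rfl⟩
  · rintro (⟨rfl,rfl⟩|⟨rfl,rfl⟩)
    · rfl
    · exact Multiset.cons_swap _ _ _ |>.trans rfl

lemma triple_eq' {α : Type*} (a b c d e f : α) : ({a,b,c} : Multiset α) = {d,e,f} ↔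
    (a=d∧b=e∧c=f) ∨ (a=d∧b=f∧c=e) ∨ (a=e∧b=d∧c=f) ∨ (a=e∧b=f∧c=d) ∨
    (a=f∧b=d∧c=e) ∨ (a=f∧b=e∧c=d) := by
  constructor
  · intro h
    rcases Multiset.cons_eq_cons.1 h with ⟨rfl, h2⟩ | ⟨hne, cs, h1, h2⟩
    · rcases (pair_eq' b c e f).1 h2 with ⟨rfl,rfl⟩|⟨rfl,rfl⟩
      · exact Or.inl ⟨rfl, rfl, rfl⟩
      · exact Or.inr (Or.inl ⟨rfl, rfl, rfl⟩)
    · rcases Multiset.cons_eq_cons.1 h1 with ⟨rfl, h3⟩ | ⟨hne2, ds, h3, h4⟩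
      · subst h3
        rcases (pair_eq' a c e f).1 h2.symm with ⟨rfl,rfl⟩|⟨rfl,rfl⟩
        · exact Or.inr (Or.inr (Or.inl ⟨rfl, rfl, rfl⟩))
        · exact Or.inr (Or.inr (Or.inr (Or.inr (Or.inl ⟨rfl, rfl, rfl⟩))))
      · obtain ⟨rfl, rfl⟩ := (Multiset.singleton_eq_cons_iff _).1 h3
        simp only [Multiset.cons_zero] at h4; subst h4
        rcases (pair_eq' a b e f).1 h2.symm with ⟨rfl,rfl⟩|⟨rfl,rfl⟩
        · exact Or.inr (Or.inr (Or.inr (Or.inl ⟨rfl, rfl, rfl⟩)))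
        · exact Or.inr (Or.inr (Or.inr (Or.inr (Or.inr ⟨rfl, rfl, rfl⟩))))
  · rintro (⟨rfl,rfl,rfl⟩|⟨rfl,rfl,rfl⟩|⟨rfl,rfl,rfl⟩|⟨rfl,rfl,rfl⟩|⟨rfl,rfl,rfl⟩|⟨rfl,rfl,rfl⟩)
    · rfl
    · exact congrArg (a ::ₘ ·) (Multiset.cons_swap b c 0)
    · exact Multiset.cons_swap a b _
    · exact (congrArg (a ::ₘ ·) (Multiset.cons_swap b c 0)).trans (Multiset.cons_swap a c _)
    · exact (Multiset.cons_swap a b _).trans (congrArg (b ::ₘ ·) (Multiset.cons_swap a c 0))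
    · exact ((Multiset.cons_swap a b _).trans
        (congrArg (b ::ₘ ·) (Multiset.cons_swap a c 0))).trans (Multiset.cons_swap b c _)

lemma cfg_iff {α : Type*} (S₁ S₂ S₃ : Set α) (a b c : α) :
    (∃ l₁ ∈ S₁, ∃ l₂ ∈ S₂, ∃ l₃ ∈ S₃, ({a,b,c} : Multiset α) = {l₁,l₂,l₃}) ↔
    ((a∈S₁∧b∈S₂∧c∈S₃) ∨ (a∈S₁∧c∈S₂∧b∈S₃) ∨ (b∈S₁∧a∈S₂∧c∈S₃) ∨
     (b∈S₁∧c∈S₂∧a∈S₃) ∨ (c∈S₁∧a∈S₂∧b∈S₃) ∨ (c∈S₁∧b∈S₂∧a∈S₃)) := by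
  constructor
  · rintro ⟨l₁, h1, l₂, h2, l₃, h3, heq⟩
    rcases (triple_eq' a b c l₁ l₂ l₃).1 heq with
      ⟨rfl,rfl,rfl⟩|⟨rfl,rfl,rfl⟩|⟨rfl,rfl,rfl⟩|⟨rfl,rfl,rfl⟩|⟨rfl,rfl,rfl⟩|⟨rfl,rfl,rfl⟩
    · exact Or.inl ⟨h1, h2, h3⟩
    · exact Or.inr (Or.inl ⟨h1, h2, h3⟩)
    · exact Or.inr (Or.inr (Or.inl ⟨h1, h2, h3⟩))
    · exact Or.inr (Or.inr (Or.inr (Or.inr (Or.inl ⟨h1, h2, h3⟩))))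
    · exact Or.inr (Or.inr (Or.inr (Or.inl ⟨h1, h2, h3⟩)))
    · exact Or.inr (Or.inr (Or.inr (Or.inr (Or.inr ⟨h1, h2, h3⟩))))
  · rintro (⟨h1,h2,h3⟩|⟨h1,h2,h3⟩|⟨h1,h2,h3⟩|⟨h1,h2,h3⟩|⟨h1,h2,h3⟩|⟨h1,h2,h3⟩)
    · exact ⟨a, h1, b, h2, c, h3, rfl⟩
    · exact ⟨a, h1, c, h2, b, h3, (triple_eq' a b c a c b).2
        (Or.inr (Or.inl ⟨rfl,rfl,rfl⟩))⟩
    · exact ⟨b, h1, a, h2, c, h3, (triple_eq' a b c b a c).2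
        (Or.inr (Or.inr (Or.inl ⟨rfl,rfl,rfl⟩)))⟩
    · exact ⟨b, h1, c, h2, a, h3, (triple_eq' a b c b c a).2
        (Or.inr (Or.inr (Or.inr (Or.inr (Or.inl ⟨rfl,rfl,rfl⟩)))))⟩
    · exact ⟨c, h1, a, h2, b, h3, (triple_eq' a b c c a b).2
        (Or.inr (Or.inr (Or.inr (Or.inl ⟨rfl,rfl,rfl⟩))))⟩
    · exact ⟨c, h1, b, h2, a, h3, (triple_eq' a b c c b a).2
        (Or.inr (Or.inr (Or.inr (Or.inr (Or.inr ⟨rfl,rfl,rfl⟩)))))⟩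

-- ===== boolean model =====
deriving instance Fintype for Lab

def labs : List Lab := [EE, MM, MY false, MY true, XM false, XM true,
  XY false false, XY false true, XY true false, XY true true]

lemma mem_labs : ∀ l : Lab, l ∈ labs := by decide

def memB (T : List TwoBit) : Lab → Bool
  | EE => false
  | MM => true
  | XY x y => decide ((x,y) ∈ T)
  | XM x => decide ((x,false) ∈ T) && decide ((x,true) ∈ T)
  | MY y => decide ((false,y) ∈ T) && decide ((true,y) ∈ T)

lemma memB_iff (L : List TwoBit) (l : Lab) :
    l ∈ aug {x | x ∈ L} ↔ memB L l = true := by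
  cases l with
  | EE => simp [aug, memB]
  | MM => simp [aug, memB]
  | MY y => cases y <;> simp [aug, memB]
  | XM x => cases x <;> simp [aug, memB]
  | XY x y => cases x <;> cases y <;> simp [aug, memB]

def cfgB (L₁ L₂ L₃ : List TwoBit) (a b c : Lab) : Bool :=
  (memB L₁ a && memB L₂ b && memB L₃ c) || (memB L₁ a && memB L₂ c && memB L₃ b) ||
  (memB L₁ b && memB L₂ a && memB L₃ c) || (memB L₁ b && memB L₂ c && memB L₃ a) ||
  (memB L₁ c && memB L₂ a && memB L₃ b) || (memB L₁ c && memB L₂ b && memB L₃ a)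

lemma cfgB_iff (L₁ L₂ L₃ : List TwoBit) (a b c : Lab) :
    (∃ l₁ ∈ aug {x | x ∈ L₁}, ∃ l₂ ∈ aug {x | x ∈ L₂}, ∃ l₃ ∈ aug {x | x ∈ L₃},
      ({a,b,c} : Multiset Lab) = {l₁,l₂,l₃}) ↔ cfgB L₁ L₂ L₃ a b c = true := by
  rw [cfg_iff]
  simp only [cfgB, memB_iff, Bool.or_eq_true, Bool.and_eq_true, or_assoc, and_assoc]

def trips : List (List TwoBit × List TwoBit × List TwoBit) :=
  [ ([b00,b10,b11],[b00],[b00]),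
    ([b01,b10,b11],[b00],[b01]),
    ([b00,b10,b11],[b01],[b01]),
    ([b00,b01,b11],[b00],[b10]),
    ([b00,b01,b10],[b00],[b11]),
    ([b00,b01,b10],[b01],[b10]),
    ([b00,b01,b11],[b01],[b11]),
    ([b01,b10,b11],[b10],[b10]),
    ([b00,b10,b11],[b10],[b11]),
    ([b01,b10,b11],[b11],[b11]),
    ([b00,b10],[b00],[b00,b11]),
    ([b01,b11],[b00],[b01,b10]),
    ([b00,b10],[b01],[b01,b10]),
    ([b01,b11],[b00,b11],[b01]),
    ([b00,b10],[b01,b11],[b10]),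
    ([b11],[b00,b10],[b00,b10]),
    ([b10],[b01,b10],[b01,b10]),
    ([b10],[b00,b11],[b00,b11]),
    ([b00,b11],[b01,b10],[b11]),
    ([b11],[b01,b11],[b01,b11]),
    ([b10,b11],[b00,b01],[b00,b01]),
    ([b10,b11],[b10,b11],[b10,b11]) ]

def EpB (a b c : Lab) : Bool :=
  (trips.any fun L => cfgB L.1 L.2.1 L.2.2 a b c) || a == MM || b == MM || c == MM

lemma vec0 {γ : Type*} (A B C : γ) : ![A,B,C] 0 = A := rfl
lemma vec1 {γ : Type*} (A B C : γ) : ![A,B,C] 1 = B := rfl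
lemma vec2 {γ : Type*} (A B C : γ) : ![A,B,C] 2 = C := rfl

lemma setL1 (p : TwoBit) : ({x | x ∈ [p]} : Set TwoBit) = {p} := by ext; simp
lemma setL2 (p q : TwoBit) : ({x | x ∈ [p,q]} : Set TwoBit) = {p,q} := by ext; simp
lemma setL3 (p q r : TwoBit) : ({x | x ∈ [p,q,r]} : Set TwoBit) = {p,q,r} := by ext; simp

lemma bitTriples_eq : bitTriples =
    trips.map (fun L => ![{x | x ∈ L.1}, {x | x ∈ L.2.1}, {x | x ∈ L.2.2}]) := by
  simp only [bitTriples, trips, List.map_cons, List.map_nil, List.cons.injEq, and_true,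
    List.mem_cons, List.mem_singleton, List.not_mem_nil, or_false]
  and_intros <;> rfl

lemma extra_iff (a b c : Lab) :
    (∃ l₁ ∈ ({MM} : Set Lab), ∃ l₂ ∈ (Set.univ : Set Lab), ∃ l₃ ∈ (Set.univ : Set Lab),
      ({a,b,c} : Multiset Lab) = {l₁,l₂,l₃}) ↔ (a = MM ∨ b = MM ∨ c = MM) := by
  rw [cfg_iff]
  simp only [Set.mem_singleton_iff, Set.mem_univ, and_true, true_and]
  tauto

lemma mem_Ep_iff (a b c : Lab) : ({a,b,c} : Multiset Lab) ∈ Ep ↔ EpB a b c = true := by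
  have : (∃ D ∈ condP, ∃ l₁ ∈ D 0, ∃ l₂ ∈ D 1, ∃ l₃ ∈ D 2,
      ({a,b,c} : Multiset Lab) = {l₁,l₂,l₃}) ↔
      ((∃ L ∈ trips, cfgB L.1 L.2.1 L.2.2 a b c = true) ∨ (a = MM ∨ b = MM ∨ c = MM)) := by
    rw [condP, bitTriples_eq]
    constructor
    · rintro ⟨D, hD, hQ⟩
      rcases List.mem_append.1 hD with hD | hD
      · rw [List.map_map] at hD
        obtain ⟨L, hL, rfl⟩ := List.mem_map.1 hD
        refine Or.inl ⟨L, hL, ?_⟩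
        rw [← cfgB_iff]
        simpa only [Function.comp, vec0, vec1, vec2] using hQ
      · rw [List.mem_singleton.1 hD] at hQ
        refine Or.inr ((extra_iff a b c).1 ?_)
        simpa only [vec0, vec1, vec2] using hQ
    · rintro (⟨L, hL, hB⟩ | hMM)
      · refine ⟨(fun j => aug (![{x | x ∈ L.1}, {x | x ∈ L.2.1}, {x | x ∈ L.2.2}] j)),
          List.mem_append.2 (Or.inl ?_), ?_⟩
        · rw [List.map_map]
          exact List.mem_map.2 ⟨L, hL, rfl⟩
        · simp only [Function.comp, vec0, vec1, vec2]
          exact (cfgB_iff _ _ _ a b c).2 hB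
      · refine ⟨![{MM}, Set.univ, Set.univ],
          List.mem_append.2 (Or.inr (List.mem_singleton.2 rfl)), ?_⟩
        simp only [vec0, vec1, vec2]
        exact (extra_iff a b c).2 hMM
  rw [Ep, Set.mem_setOf_eq, this, EpB]
  simp only [List.any_eq_true, Bool.or_eq_true, beq_iff_eq, Prod.exists, or_assoc]

/-- **The strength relation on the present-color labels Λ_p w.r.t. ℰ_p** is exactly
reflexivity together with: `EE ≤ ℓ` for every `ℓ`; `ℓ ≤ MM` for every `ℓ`;
`XM x ≤ XY x y`; and `MY y ≤ XY x y`.  No other pairs of distinct labels are related. -/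
theorem present_color_strength (l l' : Lab) :
    strongerP l l' ↔
      (l = l' ∨ l = EE ∨ l' = MM ∨
        (∃ x y, l = XM x ∧ l' = XY x y) ∨
        (∃ x y, l = MY y ∧ l' = XY x y)) := by
  have h : strongerP l l' ↔
      ∀ l₂ ∈ labs, ∀ l₃ ∈ labs, EpB l l₂ l₃ = true → EpB l' l₂ l₃ = true := by
    constructor
    · intro H l₂ _ l₃ _ hb
      exact (mem_Ep_iff l' l₂ l₃).1 (H l₂ l₃ ((mem_Ep_iff l l₂ l₃).2 hb))
    · intro H l₂ l₃ hm
      exact (mem_Ep_iff l' l₂ l₃).2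
        (H l₂ (mem_labs l₂) l₃ (mem_labs l₃) ((mem_Ep_iff l l₂ l₃).1 hm))
  rw [h]
  clear h
  revert l l'
  decide
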